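/- Let P be a nonzero complex polynomial of degree n with |P(i)| = 1. Then there exists λ₀ ∈ [-1,1] such that |P(λ₀)| ≥ 1/(4(n+1))^n. -/

import Mathlib

/-!
One of the `n + 1` equal subintervals of `[-1, 1]` contains the real part of no root of `P`;
its midpoint `λ₀` then has distance at least `1 / (n + 1)` from every root `α`, while
`|i - α| ≤ 2 + |λ₀ - α|`. Hence `|λ₀ - α| ≥ |i - α| / (4 (n + 1))` for each root, and multiplying
over the factorization `P = μ ∏ (X - α)` gives `|P(λ₀)| ≥ |P(i)| / (4 (n + 1)) ^ n`.
-/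

open Polynomial Complex

theorem Polynomial.Splits.pow_natDegree_mul_norm_eval_le {K : Type*} [NormedField K] {P : K[X]}
    (hP : P.Splits) {c : ℝ} (hc : 0 ≤ c) {w z : K}
    (h : ∀ a ∈ P.roots, c * ‖w - a‖ ≤ ‖z - a‖) :
    c ^ P.natDegree * ‖P.eval w‖ ≤ ‖P.eval z‖ := by
  have norm_prod (m : Multiset K) : ‖m.prod‖ = (m.map (‖·‖)).prod := map_multiset_prod normHom m
  rw [hP.eval_eq_prod_roots, hP.eval_eq_prod_roots, norm_mul, norm_mul, norm_prod,
    norm_prod, Multiset.map_map, Multiset.map_map, hP.natDegree_eq_card_roots,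
    mul_left_comm, ← Multiset.prod_replicate, ← Multiset.map_const', ← Multiset.prod_map_mul]
  gcongr
  exact Multiset.prod_map_le_prod_map₀ _ _ (fun a _ ↦ mul_nonneg hc (norm_nonneg _)) h

noncomputable def subintervalMidpoint (n k : ℕ) : ℝ := -1 + (2 * k + 1) / (n + 1)

theorem subintervalMidpoint_mem_Icc {n k : ℕ} (hk : k ≤ n) :
    subintervalMidpoint n k ∈ Set.Icc (-1 : ℝ) 1 := by
  have hkn : (k : ℝ) ≤ n := by exact_mod_cast hk
  have hn : (0 : ℝ) < n + 1 := by positivity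
  constructor
  · have : (0 : ℝ) ≤ (2 * k + 1) / (n + 1) := by positivity
    unfold subintervalMidpoint; linarith
  · have : (2 * k + 1 : ℝ) / (n + 1) ≤ 2 := by rw [div_le_iff₀ hn]; linarith
    unfold subintervalMidpoint; linarith

theorem two_div_le_abs_subintervalMidpoint_sub {n j k : ℕ} (hjk : j ≠ k) :
    2 / (n + 1) ≤ |subintervalMidpoint n j - subintervalMidpoint n k| := by
  have hn : (0 : ℝ) < n + 1 := by positivity
  have hsub : subintervalMidpoint n j - subintervalMidpoint n k = 2 * ((j : ℝ) - k) / (n + 1) := by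
    unfold subintervalMidpoint; ring
  have hjk' : (1 : ℝ) ≤ |(j : ℝ) - k| := by
    rcases hjk.lt_or_gt with hlt | hgt
    · have : (j : ℝ) + 1 ≤ k := by exact_mod_cast hlt
      rw [abs_sub_comm, le_abs]; left; linarith
    · have : (k : ℝ) + 1 ≤ j := by exact_mod_cast hgt
      rw [le_abs]; left; linarith
  rw [hsub, abs_div, abs_mul, abs_two, abs_of_pos hn]
  gcongr
  linarith

theorem exists_subintervalMidpoint_forall_le_abs_sub {n : ℕ} (s : Finset ℝ) (hs : s.card ≤ n) :
    ∃ k ≤ n, ∀ x ∈ s, 1 / (n + 1) ≤ |subintervalMidpoint n k - x| := by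
  by_contra! h
  choose! f hfs hf using h
  obtain ⟨j, hj, k, hk, hjk, hfjk⟩ := Finset.exists_ne_map_eq_of_card_lt_of_maps_to
    (s := Finset.range (n + 1)) (t := s) (by simpa [Nat.lt_succ_iff] using hs)
    (fun k hk ↦ hfs k (Finset.mem_range_succ_iff.mp hk))
  have hfj := hf j (Finset.mem_range_succ_iff.mp hj)
  have hfk := hf k (Finset.mem_range_succ_iff.mp hk)
  rw [hfjk] at hfj
  refine lt_irrefl (2 / (n + 1 : ℝ)) ?_
  calc 2 / (n + 1 : ℝ)
      ≤ |subintervalMidpoint n j - subintervalMidpoint n k| :=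
        two_div_le_abs_subintervalMidpoint_sub hjk
    _ ≤ |subintervalMidpoint n j - f k| + |f k - subintervalMidpoint n k| := abs_sub_le _ _ _
    _ < 1 / (n + 1) + 1 / (n + 1) := add_lt_add hfj (by rwa [abs_sub_comm])
    _ = 2 / (n + 1) := by ring

theorem mul_norm_I_sub_le_three_mul_norm_sub {lam : ℝ} (hlam : lam ∈ Set.Icc (-1 : ℝ) 1)
    {a : ℂ} {δ : ℝ} (hδ : δ ≤ 1) (hδa : δ ≤ |lam - a.re|) : δ * ‖I - a‖ ≤ 3 * ‖(lam : ℂ) - a‖ := by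
  have hre : δ ≤ ‖(lam : ℂ) - a‖ := hδa.trans (by simpa using abs_re_le_norm ((lam : ℂ) - a))
  have hI : ‖I - (lam : ℂ)‖ ≤ 2 := by
    refine (norm_sub_le _ _).trans ?_
    rw [norm_I, norm_real, Real.norm_eq_abs]
    linarith [abs_le.mpr hlam]
  have htri : ‖I - a‖ ≤ 2 + ‖(lam : ℂ) - a‖ :=
    (norm_sub_le_norm_sub_add_norm_sub _ _ _).trans (by linarith)
  rcases le_or_gt 0 δ with hδ0 | hδ0
  · nlinarith
  · linarith [mul_nonpos_of_nonpos_of_nonneg hδ0.le (norm_nonneg (I - a)),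
      norm_nonneg ((lam : ℂ) - a)]

theorem exists_lambda_abs_eval_ge
    (n : ℕ) (P : Polynomial ℂ) (hdeg : P.natDegree = n)
    (hPi : ‖P.eval Complex.I‖ = 1) :
    ∃ lam : ℝ, lam ∈ Set.Icc (-1 : ℝ) 1 ∧
      (1 / (4 * (n + 1 : ℝ))) ^ n ≤ ‖P.eval (lam : ℂ)‖ := by
  have hsplits : P.Splits := IsAlgClosed.splits P
  have hcard : (P.roots.map re).toFinset.card ≤ n := by
    simpa [← hsplits.natDegree_eq_card_roots, hdeg] using
      Multiset.toFinset_card_le (P.roots.map re)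
  obtain ⟨k, hk, hfar⟩ := exists_subintervalMidpoint_forall_le_abs_sub _ hcard
  have hmem := subintervalMidpoint_mem_Icc hk
  refine ⟨_, hmem, ?_⟩
  have hroot : ∀ a ∈ P.roots,
      1 / (4 * (n + 1 : ℝ)) * ‖I - a‖ ≤ ‖(subintervalMidpoint n k : ℂ) - a‖ := by
    intro a ha
    have hδ : 1 / (n + 1 : ℝ) ≤ 1 := by
      rw [div_le_one (by positivity)]; linarith [(n.cast_nonneg : (0 : ℝ) ≤ n)]
    have := mul_norm_I_sub_le_three_mul_norm_sub hmem hδ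
      (hfar a.re (Multiset.mem_toFinset.mpr (Multiset.mem_map_of_mem re ha)))
    have h4 : 1 / (4 * (n + 1 : ℝ)) = 1 / (n + 1) / 4 := by rw [div_div, mul_comm]
    rw [h4, div_mul_eq_mul_div]
    linarith [norm_nonneg ((subintervalMidpoint n k : ℂ) - a)]
  simpa [hPi, hdeg] using hsplits.pow_natDegree_mul_norm_eval_le (by positivity) hroot
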